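/- Let A₁, A₂ be symmetric positive definite matrices of sizes n₁, n₂ and H₁ (m×n₁), H₂ (m×n₂) with [H₁, H₂] surjective. If λ solves (H₁A₁⁻¹H₁ᵀ + H₂A₂⁻¹H₂ᵀ) λ = H₁A₁⁻¹f₁ + H₂A₂⁻¹f₂ and we set x₁ = A₁⁻¹(f₁ − H₁ᵀλ), x₂ = A₂⁻¹(f₂ − H₂ᵀλ), then (x₁, x₂, λ) solves the coupled system A₁x₁ + H₁ᵀλ = f₁, A₂x₂ + H₂ᵀλ = f₂, H₁x₁ + H₂x₂ = 0, and this solution is unique. -/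

import Mathlib

/-!
Eliminating `x₁, x₂` from the coupled system leaves exactly the interface equation
`S λ = H₁ A₁⁻¹ f₁ + H₂ A₂⁻¹ f₂` with `S = H₁ A₁⁻¹ H₁ᵀ + H₂ A₂⁻¹ H₂ᵀ`, so the two problems have the
same solutions. Uniqueness comes from `S = H D Hᵀ`, where `H = [H₁, H₂]` and `D` is the block
diagonal matrix with blocks `A₁⁻¹, A₂⁻¹`: `D` is positive definite and `Hᵀ` is injective because
`H` is surjective, so `S` is positive definite, hence invertible.
-/

open Matrix

namespace Matrix

variable {m n p R : Type*} [Fintype m] [Fintype n]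

theorem vecMul_injective_of_surjective_mulVec [Semiring R] {A : Matrix m n R}
    (hA : Function.Surjective A.mulVec) : Function.Injective A.vecMul := by
  classical
  obtain ⟨B, hAB⟩ := mulVec_surjective_iff_exists_right_inverse.mp hA
  intro v w hvw
  simpa [vecMul_vecMul, hAB] using congrArg (· ᵥ* B) hvw

theorem fromCols_mul_fromBlocks_zero_mul_conjTranspose [Semiring R] [StarRing R]
    (H₁ : Matrix p m R) (H₂ : Matrix p n R) (B₁ : Matrix m m R) (B₂ : Matrix n n R) :
    fromCols H₁ H₂ * fromBlocks B₁ 0 0 B₂ * (fromCols H₁ H₂)ᴴ =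
      H₁ * B₁ * H₁ᴴ + H₂ * B₂ * H₂ᴴ := by
  simp [fromCols_mul_fromBlocks, conjTranspose_fromCols_eq_fromRows_conjTranspose,
    fromCols_mul_fromRows]

variable [Fintype p]

section PosDef

variable [Ring R] [PartialOrder R] [StarRing R] [StarOrderedRing R]

theorem PosDef.fromBlocks_zero {A : Matrix m m R} {D : Matrix n n R} (hA : A.PosDef)
    (hD : D.PosDef) : (fromBlocks A 0 0 D).PosDef := by
  refine PosDef.of_dotProduct_mulVec_pos ?_ fun x hx => ?_
  · simp only [IsHermitian, fromBlocks_conjTranspose, hA.1.eq, hD.1.eq, conjTranspose_zero]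
  obtain ⟨x₁, x₂, rfl⟩ : ∃ x₁ x₂, x = Sum.elim x₁ x₂ := ⟨_, _, (Sum.elim_comp_inl_inr x).symm⟩
  simp only [fromBlocks_mulVec, Sum.elim_comp_inl, Sum.elim_comp_inr, zero_mulVec, add_zero,
    zero_add, Function.star_sumElim, sumElim_dotProduct_sumElim]
  by_cases h₁ : x₁ = 0
  · have h₂ : x₂ ≠ 0 := by rintro rfl; exact hx (h₁ ▸ Sum.elim_zero_zero)
    exact add_pos_of_nonneg_of_pos (hA.posSemidef.dotProduct_mulVec_nonneg _)
      (hD.dotProduct_mulVec_pos h₂)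
  · exact add_pos_of_pos_of_nonneg (hA.dotProduct_mulVec_pos h₁)
      (hD.posSemidef.dotProduct_mulVec_nonneg _)

theorem PosDef.mul_mul_conjTranspose_add_of_surjective {H₁ : Matrix p m R}
    {H₂ : Matrix p n R} {B₁ : Matrix m m R} {B₂ : Matrix n n R} (hB₁ : B₁.PosDef)
    (hB₂ : B₂.PosDef) (hH : Function.Surjective (fromCols H₁ H₂).mulVec) :
    (H₁ * B₁ * H₁ᴴ + H₂ * B₂ * H₂ᴴ).PosDef := by
  rw [← fromCols_mul_fromBlocks_zero_mul_conjTranspose]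
  exact (hB₁.fromBlocks_zero hB₂).mul_mul_conjTranspose_same
    (vecMul_injective_of_surjective_mulVec hH)

end PosDef

variable [DecidableEq m] [DecidableEq n] [CommRing R]

theorem mulVec_add_eq_iff_eq_inv_mulVec {A : Matrix n n R} (hA : IsUnit A.det)
    {x g f : n → R} : A *ᵥ x + g = f ↔ x = A⁻¹ *ᵥ (f - g) := by
  constructor
  · rintro rfl
    rw [add_sub_cancel_right, mulVec_mulVec, nonsing_inv_mul _ hA, one_mulVec]
  · rintro rfl
    rw [mulVec_mulVec, mul_nonsing_inv _ hA, one_mulVec, sub_add_cancel]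

theorem saddlePoint_iff {A₁ : Matrix m m R} {A₂ : Matrix n n R} (hA₁ : IsUnit A₁.det)
    (hA₂ : IsUnit A₂.det) (H₁ : Matrix p m R) (H₂ : Matrix p n R) (f₁ : m → R) (f₂ : n → R)
    (y₁ : m → R) (y₂ : n → R) (μ : p → R) :
    (A₁ *ᵥ y₁ + H₁ᵀ *ᵥ μ = f₁ ∧ A₂ *ᵥ y₂ + H₂ᵀ *ᵥ μ = f₂ ∧ H₁ *ᵥ y₁ + H₂ *ᵥ y₂ = 0) ↔
      (y₁ = A₁⁻¹ *ᵥ (f₁ - H₁ᵀ *ᵥ μ) ∧ y₂ = A₂⁻¹ *ᵥ (f₂ - H₂ᵀ *ᵥ μ) ∧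
        (H₁ * A₁⁻¹ * H₁ᵀ + H₂ * A₂⁻¹ * H₂ᵀ) *ᵥ μ =
          H₁ *ᵥ (A₁⁻¹ *ᵥ f₁) + H₂ *ᵥ (A₂⁻¹ *ᵥ f₂)) := by
  have hresidual :
      H₁ *ᵥ (A₁⁻¹ *ᵥ (f₁ - H₁ᵀ *ᵥ μ)) + H₂ *ᵥ (A₂⁻¹ *ᵥ (f₂ - H₂ᵀ *ᵥ μ)) =
        H₁ *ᵥ (A₁⁻¹ *ᵥ f₁) + H₂ *ᵥ (A₂⁻¹ *ᵥ f₂) -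
          (H₁ * A₁⁻¹ * H₁ᵀ + H₂ * A₂⁻¹ * H₂ᵀ) *ᵥ μ := by
    simp only [mulVec_sub, add_mulVec, ← mulVec_mulVec]
    abel
  rw [mulVec_add_eq_iff_eq_inv_mulVec hA₁, mulVec_add_eq_iff_eq_inv_mulVec hA₂]
  constructor <;> rintro ⟨rfl, rfl, h⟩ <;> refine ⟨rfl, rfl, ?_⟩ <;> rw [hresidual] at *
  · exact (sub_eq_zero.mp h).symm
  · exact sub_eq_zero.mpr h.symm

end Matrix

theorem stmt_15 {n₁ n₂ m : Type*} [Fintype n₁] [Fintype n₂] [Fintype m]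
    [DecidableEq n₁] [DecidableEq n₂] [DecidableEq m]
    (A₁ : Matrix n₁ n₁ ℝ) (A₂ : Matrix n₂ n₂ ℝ)
    (H₁ : Matrix m n₁ ℝ) (H₂ : Matrix m n₂ ℝ)
    (hA₁ : A₁.PosDef) (hA₂ : A₂.PosDef)
    (hH : Function.Surjective (Matrix.fromCols H₁ H₂).mulVec)
    (f₁ : n₁ → ℝ) (f₂ : n₂ → ℝ) (lam : m → ℝ)
    (hlam : (H₁ * A₁⁻¹ * H₁ᵀ + H₂ * A₂⁻¹ * H₂ᵀ).mulVec lam =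
      H₁.mulVec (A₁⁻¹.mulVec f₁) + H₂.mulVec (A₂⁻¹.mulVec f₂))
    (x₁ : n₁ → ℝ) (x₂ : n₂ → ℝ)
    (hx₁ : x₁ = A₁⁻¹.mulVec (f₁ - H₁ᵀ.mulVec lam))
    (hx₂ : x₂ = A₂⁻¹.mulVec (f₂ - H₂ᵀ.mulVec lam)) :
    (A₁.mulVec x₁ + H₁ᵀ.mulVec lam = f₁ ∧
     A₂.mulVec x₂ + H₂ᵀ.mulVec lam = f₂ ∧
     H₁.mulVec x₁ + H₂.mulVec x₂ = 0) ∧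
    (∀ (y₁ : n₁ → ℝ) (y₂ : n₂ → ℝ) (μ : m → ℝ),
      A₁.mulVec y₁ + H₁ᵀ.mulVec μ = f₁ →
      A₂.mulVec y₂ + H₂ᵀ.mulVec μ = f₂ →
      H₁.mulVec y₁ + H₂.mulVec y₂ = 0 →
      y₁ = x₁ ∧ y₂ = x₂ ∧ μ = lam) := by
  have hS : (H₁ * A₁⁻¹ * H₁ᵀ + H₂ * A₂⁻¹ * H₂ᵀ).PosDef := by
    simpa only [conjTranspose_eq_transpose_of_trivial] using
      hA₁.inv.mul_mul_conjTranspose_add_of_surjective hA₂.inv hH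
  have hsystem := saddlePoint_iff ((isUnit_iff_isUnit_det _).mp hA₁.isUnit)
    ((isUnit_iff_isUnit_det _).mp hA₂.isUnit) H₁ H₂ f₁ f₂
  refine ⟨(hsystem x₁ x₂ lam).mpr ⟨hx₁, hx₂, hlam⟩, fun y₁ y₂ μ h₁ h₂ h₃ => ?_⟩
  obtain ⟨rfl, rfl, hμ⟩ := (hsystem y₁ y₂ μ).mp ⟨h₁, h₂, h₃⟩
  obtain rfl : μ = lam := mulVec_injective_of_isUnit hS.isUnit (hμ.trans hlam.symm)
  exact ⟨hx₁.symm, hx₂.symm, rfl⟩
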